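/- Suppose the sequence (x, y) is not realizable by H, let T₀ be the least t ≤ T with V T₀ = ∅ (which exists since unrealizability forces V T = ∅), and assume T₀ < T. Let d = |H| ≥ 1 with an enumeration h : Fin d → (X → Bool) of H, let M i t = |{s | s < t ∧ (h i) (x s) ≠ y s}| be the cumulative mistake count of hypothesis i over all rounds from the start, and set η = √(8 · ln d / (T − T₀)). Define the per-round loss of the WM_Consistent algorithm by m t = (if (σ t) (x t) ≠ y t then (1:ℝ) else 0) for t < T₀ (where σ is any Consistent learner), and m t = Σ_{i<d} w i t · (if (h i) (x t) ≠ y t then (1:ℝ) else 0) for T₀ ≤ t < T, where w i t = exp(−η · M i t) / Σ_{j<d} exp(−η · M j t). Then Σ_{t<T} m t − min_{i<d} (M i T : ℝ) ≤ |H| + √(0.5 · ln |H| · (T − T₀)). -/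

import Mathlib

open Finset Real

lemma bern_hoeffding {p : ℝ} (hp0 : 0 ≤ p) (hp1 : p ≤ 1) {t : ℝ} (ht : t ≤ 0) :
    1 - p + p * Real.exp t ≤ Real.exp (p * t + t ^ 2 / 8) := by
  set D : ℝ → ℝ := fun s => 1 - p + p * Real.exp s with hDdef
  have hDpos : ∀ s, 0 < D s := by
    intro s
    rcases eq_or_lt_of_le hp0 with h0 | h0
    · simp [hDdef, ← h0]
    · have := Real.exp_pos s
      simp only [hDdef]
      nlinarith
  set g : ℝ → ℝ := fun s => p * s + s ^ 2 / 8 - Real.log (D s) with hgdef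
  set g1 : ℝ → ℝ := fun s => p + s / 4 - p * Real.exp s / D s with hg1def
  have hD' : ∀ s, HasDerivAt D (p * Real.exp s) s := by
    intro s
    exact ((Real.hasDerivAt_exp s).const_mul p).const_add (1 - p)
  have hg' : ∀ s, HasDerivAt g (g1 s) s := by
    intro s
    have hlog : HasDerivAt (fun u => Real.log (D u)) (p * Real.exp s / D s) s :=
      (hD' s).log (hDpos s).ne'
    have h1 : HasDerivAt (fun u : ℝ => p * u + u ^ 2 / 8) (p + s / 4) s := by
      have ha : HasDerivAt (fun u : ℝ => p * u) p s := by
        simpa using (hasDerivAt_id s).const_mul p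
      have hb : HasDerivAt (fun u : ℝ => u ^ 2 / 8) (s / 4) s := by
        have := (hasDerivAt_pow 2 s).div_const 8
        exact this.congr_deriv (by ring)
      exact ha.add hb
    exact h1.sub hlog
  have hg1' : ∀ s, HasDerivAt g1
      (1 / 4 - (p * Real.exp s * D s - p * Real.exp s * (p * Real.exp s)) / (D s) ^ 2) s := by
    intro s
    have hq : HasDerivAt (fun u => p * Real.exp u / D u)
        ((p * Real.exp s * D s - p * Real.exp s * (p * Real.exp s)) / (D s) ^ 2) s :=
      ((Real.hasDerivAt_exp s).const_mul p).div (hD' s) (hDpos s).ne'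
    have h1 : HasDerivAt (fun u : ℝ => p + u / 4) (1 / 4) s := by
      simpa using ((hasDerivAt_id s).div_const 4).const_add p
    exact h1.sub hq
  have hg1deriv_nonneg : ∀ s, 0 ≤ 1 / 4 -
      (p * Real.exp s * D s - p * Real.exp s * (p * Real.exp s)) / (D s) ^ 2 := by
    intro s
    have hDp := hDpos s
    have he : 0 ≤ p * Real.exp s := mul_nonneg hp0 (Real.exp_pos s).le
    have heD : p * Real.exp s ≤ D s := by
      simp only [hDdef]; linarith
    rw [sub_nonneg, div_le_iff₀ (by positivity)]
    have key : ∀ e A : ℝ, 0 ≤ e → e ≤ A → e * A - e * e ≤ 1 / 4 * A ^ 2 := by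
      intro e A he0 heA
      nlinarith [sq_nonneg (A - 2 * e)]
    exact key _ _ he heD
  have hg1mono : Monotone g1 := by
    apply monotone_of_deriv_nonneg
    · exact fun s => (hg1' s).differentiableAt
    · intro s
      rw [(hg1' s).deriv]
      exact hg1deriv_nonneg s
  have hg1zero : g1 0 = 0 := by
    have : D 0 = 1 := by simp [hDdef]
    simp [hg1def, this]
  have hg1nonpos : ∀ s ≤ 0, g1 s ≤ 0 := fun s hs => hg1zero ▸ hg1mono hs
  have hganti : AntitoneOn g (Set.Iic 0) := by
    apply antitoneOn_of_deriv_nonpos (convex_Iic 0)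
    · exact fun s _ => (hg' s).differentiableAt.continuousAt.continuousWithinAt
    · exact fun s _ => (hg' s).differentiableAt.differentiableWithinAt
    · intro s hs
      rw [(hg' s).deriv]
      exact hg1nonpos s (le_of_lt (by simpa using hs))
  have hg0 : g 0 = 0 := by
    have : D 0 = 1 := by simp [hDdef]
    simp [hgdef, this]
  have hgt : 0 ≤ g t := by
    have := hganti (Set.mem_Iic.mpr ht) (Set.mem_Iic.mpr le_rfl) ht
    rwa [hg0] at this
  have : Real.log (D t) ≤ p * t + t ^ 2 / 8 := by
    simp only [hgdef] at hgt; linarith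
  have := (Real.log_le_iff_le_exp (hDpos t)).mp this
  simpa [hDdef] using this

/-- Regret bound for WM_Consistent in the unrealizable case: the
Consistent phase (up to the first time `T₀` the version space empties) contributes at
most `|H|` mistakes, and the Weighted Majority phase on the remaining `T − T₀` rounds
contributes at most `√(0.5 ln |H| (T − T₀))` regret. -/
theorem wm_consistent_unrealizable_regret {X : Type*} (T : ℕ)
    (H : Finset (X → Bool)) (x : Fin T → X) (y : Fin T → Bool)
    (V : ℕ → Finset (X → Bool))
    (hV0 : V 0 = H)
    (hVs : ∀ t : Fin T, V (t.val + 1) = (V t.val).filter (fun h => h (x t) = y t))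
    (hnr : ¬ ∃ hstar ∈ H, ∀ t : Fin T, hstar (x t) = y t)
    (T₀ : ℕ) (hT₀lt : T₀ < T) (hT₀empty : V T₀ = ∅)
    (hT₀least : ∀ s < T₀, (V s).Nonempty)
    (d : ℕ) (hd : 1 ≤ d) (hdcard : d = H.card)
    (h : Fin d → (X → Bool)) (hinj : Function.Injective h) (hmem : ∀ i, h i ∈ H)
    (M : Fin d → ℕ → ℕ)
    (hM : ∀ i t, M i t =
      (Finset.univ.filter fun s : Fin T => s.val < t ∧ h i (x s) ≠ y s).card)
    (η : ℝ) (hη : η = Real.sqrt (8 * Real.log d / (T - T₀)))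
    (w : Fin d → ℕ → ℝ)
    (hw : ∀ i t, w i t = Real.exp (-η * M i t) / ∑ j, Real.exp (-η * M j t))
    (σ : Fin T → (X → Bool))
    (hσ : ∀ t : Fin T, (V t.val).Nonempty → σ t ∈ V t.val)
    (m : Fin T → ℝ)
    (hm1 : ∀ t : Fin T, t.val < T₀ → m t = (if σ t (x t) ≠ y t then (1 : ℝ) else 0))
    (hm2 : ∀ t : Fin T, T₀ ≤ t.val →
      m t = ∑ i, w i t.val * (if h i (x t) ≠ y t then (1 : ℝ) else 0)) :
    (∑ t, m t) -
        (Finset.univ.inf' (Finset.univ_nonempty_iff.mpr (Fin.pos_iff_nonempty.mp hd))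
          fun i : Fin d => (M i T : ℝ))
      ≤ H.card + Real.sqrt (0.5 * Real.log H.card * (T - T₀)) := by
  classical
  have hT₀T : T₀ ≤ T := le_of_lt hT₀lt
  have hηnn : 0 ≤ η := hη ▸ Real.sqrt_nonneg _
  -- per-round losses as naturals
  set ℓ : Fin d → ℕ → ℕ :=
    fun i t => if ht : t < T then (if h i (x ⟨t, ht⟩) ≠ y ⟨t, ht⟩ then 1 else 0) else 0
    with hℓdef
  -- extended algorithm loss
  set m' : ℕ → ℝ := fun t => if ht : t < T then m ⟨t, ht⟩ else 0 with hm'def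
  have hsum_m : (∑ t, m t) = ∑ t ∈ Finset.range T, m' t := by
    rw [← Fin.sum_univ_eq_sum_range]
    exact Finset.sum_congr rfl fun t _ => by simp [hm'def, t.isLt]
  -- recurrence for M
  have hMstep : ∀ (i : Fin d) (t : ℕ), t < T → M i (t + 1) = M i t + ℓ i t := by
    intro i t ht
    rw [hM, hM, Finset.card_filter, Finset.card_filter]
    have key : ∀ s : Fin T,
        (if s.val < t + 1 ∧ h i (x s) ≠ y s then (1 : ℕ) else 0)
        = (if s.val < t ∧ h i (x s) ≠ y s then 1 else 0)
          + (if s = ⟨t, ht⟩ then (if h i (x s) ≠ y s then 1 else 0) else 0) := by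
      intro s
      by_cases hP : h i (x s) ≠ y s
      · by_cases hst : s = (⟨t, ht⟩ : Fin T)
        · subst hst; simp [hP]
        · have hvne : s.val ≠ t := fun hh => hst (Fin.ext hh)
          rw [if_neg hst, add_zero]
          exact if_congr (and_congr_left' (by omega)) rfl rfl
      · simp [hP]
    rw [Finset.sum_congr rfl fun s _ => key s, Finset.sum_add_distrib,
      Finset.sum_ite_eq' Finset.univ (⟨t, ht⟩ : Fin T)]
    simp [hℓdef, ht]
  have hMsum : ∀ (i : Fin d) (u : ℕ), u ≤ T → M i u = ∑ t ∈ Finset.range u, ℓ i t := by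
    intro i u hu
    induction u with
    | zero => simp [hM i 0]
    | succ v ih =>
        rw [Finset.sum_range_succ, ← ih (le_of_lt (Nat.lt_of_succ_le hu)),
          hMstep i v (Nat.lt_of_succ_le hu)]
  -- Phase 1 bound
  have hphase1 : (∑ t ∈ Finset.range T₀, m' t) ≤ (d : ℝ) := by
    have haux : ∀ u, u ≤ T₀ → (∑ t ∈ Finset.range u, m' t) + ((V u).card : ℝ) ≤ d := by
      intro u hu
      induction u with
      | zero => simp [hV0, hdcard]
      | succ v ih =>
          have hv : v < T₀ := hu
          have hvT : v < T := lt_trans hv hT₀lt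
          have hVv : (V v).Nonempty := hT₀least v hv
          have hfil : V (v + 1) = (V v).filter (fun hh => hh (x ⟨v, hvT⟩) = y ⟨v, hvT⟩) :=
            hVs ⟨v, hvT⟩
          have hmv : m' v = if σ ⟨v, hvT⟩ (x ⟨v, hvT⟩) ≠ y ⟨v, hvT⟩ then (1 : ℝ) else 0 := by
            simp only [hm'def]; rw [dif_pos hvT]; exact hm1 ⟨v, hvT⟩ hv
          have ihv := ih (le_of_lt hv)
          rw [Finset.sum_range_succ]
          by_cases hmis : σ ⟨v, hvT⟩ (x ⟨v, hvT⟩) ≠ y ⟨v, hvT⟩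
          · have hσv := hσ ⟨v, hvT⟩ hVv
            have hnot : σ ⟨v, hvT⟩ ∉ V (v + 1) := by
              rw [hfil]; intro hc
              exact hmis (Finset.mem_filter.mp hc).2
            have hsub : V (v + 1) ⊆ (V v).erase (σ ⟨v, hvT⟩) := by
              intro a ha
              refine Finset.mem_erase.mpr ⟨fun he => hnot (he ▸ ha), ?_⟩
              rw [hfil] at ha; exact Finset.filter_subset _ _ ha
            have h1 : 1 ≤ (V v).card := Finset.card_pos.mpr hVv
            have hcard : (V (v + 1)).card + 1 ≤ (V v).card := by
              have h2 : (V (v + 1)).card ≤ ((V v).erase (σ ⟨v, hvT⟩)).card :=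
                Finset.card_le_card hsub
              have h3 : ((V v).erase (σ ⟨v, hvT⟩)).card = (V v).card - 1 :=
                Finset.card_erase_of_mem hσv
              omega
            have hcR : ((V (v + 1)).card : ℝ) + 1 ≤ ((V v).card : ℝ) := by exact_mod_cast hcard
            rw [hmv, if_pos hmis]
            linarith
          · have hsub : V (v + 1) ⊆ V v := hfil ▸ Finset.filter_subset _ _
            have hcR : ((V (v + 1)).card : ℝ) ≤ ((V v).card : ℝ) := by
              exact_mod_cast Finset.card_le_card hsub
            rw [hmv, if_neg hmis]
            linarith
    have := haux T₀ le_rfl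
    rw [hT₀empty] at this
    simpa using this
  -- Phase 2: potential function
  set W : ℕ → ℝ := fun t => ∑ j, Real.exp (-η * M j t) with hWdef
  have hWpos : ∀ t, 0 < W t := by
    intro t
    exact Finset.sum_pos (fun j _ => Real.exp_pos _)
      (Finset.univ_nonempty_iff.mpr (Fin.pos_iff_nonempty.mp hd))
  have hℓ01 : ∀ (i : Fin d) (t : ℕ), ℓ i t = 0 ∨ ℓ i t = 1 := by
    intro i t
    simp only [hℓdef]
    split_ifs <;> simp
  have hstep : ∀ t, T₀ ≤ t → t < T →
      W (t + 1) ≤ W t * Real.exp (-η * m' t + η ^ 2 / 8) := by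
    intro t ht₀ htT
    have hmp : m' t = ∑ i, w i t * ((ℓ i t : ℕ) : ℝ) := by
      simp only [hm'def]
      rw [dif_pos htT, hm2 ⟨t, htT⟩ ht₀]
      refine Finset.sum_congr rfl fun i _ => ?_
      congr 1
      simp only [hℓdef]
      rw [dif_pos htT]
      split_ifs <;> norm_num
    have hWne : W t ≠ 0 := (hWpos t).ne'
    have hwi : ∀ i, w i t = Real.exp (-η * M i t) / W t := fun i => hw i t
    have hw_nonneg : ∀ i, 0 ≤ w i t := fun i => by
      rw [hwi i]; exact div_nonneg (Real.exp_pos _).le (hWpos t).le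
    have hsum_w : ∑ i, w i t = 1 := by
      simp only [hwi]
      rw [← Finset.sum_div]
      exact div_self hWne
    have hp0 : 0 ≤ m' t := by
      rw [hmp]
      exact Finset.sum_nonneg fun i _ => mul_nonneg (hw_nonneg i) (Nat.cast_nonneg _)
    have hp1 : m' t ≤ 1 := by
      rw [hmp, ← hsum_w]
      refine Finset.sum_le_sum fun i _ => ?_
      have hle : ((ℓ i t : ℕ) : ℝ) ≤ 1 := by
        rcases hℓ01 i t with hl | hl <;> rw [hl] <;> norm_num
      exact mul_le_of_le_one_right (hw_nonneg i) hle
    have hkey : ∑ i, Real.exp (-η * M i t) * ((ℓ i t : ℕ) : ℝ) = m' t * W t := by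
      rw [hmp, Finset.sum_mul]
      refine Finset.sum_congr rfl fun i _ => ?_
      rw [hwi i]
      field_simp
    have hWsucc : W (t + 1) = W t * (1 - m' t + m' t * Real.exp (-η)) := by
      have hterm : ∀ i : Fin d, Real.exp (-η * M i (t + 1))
          = Real.exp (-η * M i t) - Real.exp (-η * M i t) * ((ℓ i t : ℕ) : ℝ)
            + Real.exp (-η * M i t) * ((ℓ i t : ℕ) : ℝ) * Real.exp (-η) := by
        intro i
        rw [hMstep i t htT]
        rcases hℓ01 i t with hl | hl <;> rw [hl]
        · norm_num
        · push_cast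
          rw [mul_add, Real.exp_add]
          ring
      show (∑ j, Real.exp (-η * M j (t + 1))) = _
      rw [Finset.sum_congr rfl fun i _ => hterm i]
      rw [Finset.sum_add_distrib, Finset.sum_sub_distrib, ← Finset.sum_mul, hkey]
      show W t - m' t * W t + m' t * W t * Real.exp (-η) = _
      ring
    rw [hWsucc]
    have hb := bern_hoeffding hp0 hp1 (t := -η) (neg_nonpos.mpr hηnn)
    have hb' : 1 - m' t + m' t * Real.exp (-η) ≤ Real.exp (-η * m' t + η ^ 2 / 8) := by
      have : m' t * -η + (-η) ^ 2 / 8 = -η * m' t + η ^ 2 / 8 := by ring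
      rwa [this] at hb
    exact mul_le_mul_of_nonneg_left hb' (hWpos t).le
  have hiter : ∀ u, T₀ ≤ u → u ≤ T →
      W u ≤ W T₀ * Real.exp (-η * (∑ t ∈ Finset.Ico T₀ u, m' t)
        + ((u - T₀ : ℕ) : ℝ) * η ^ 2 / 8) := by
    intro u hu
    induction u, hu using Nat.le_induction with
    | base => intro _; simp
    | succ v hv ih =>
        intro hvT
        have hvT' : v < T := Nat.lt_of_succ_le hvT
        calc W (v + 1) ≤ W v * Real.exp (-η * m' v + η ^ 2 / 8) :=
              hstep v hv hvT'
          _ ≤ (W T₀ * Real.exp (-η * (∑ t ∈ Finset.Ico T₀ v, m' t)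
                + ((v - T₀ : ℕ) : ℝ) * η ^ 2 / 8)) * Real.exp (-η * m' v + η ^ 2 / 8) := by
              apply mul_le_mul_of_nonneg_right (ih (le_of_lt hvT')) (Real.exp_pos _).le
          _ = W T₀ * Real.exp (-η * (∑ t ∈ Finset.Ico T₀ (v + 1), m' t)
                + ((v + 1 - T₀ : ℕ) : ℝ) * η ^ 2 / 8) := by
              rw [Finset.sum_Ico_succ_top hv, mul_assoc, ← Real.exp_add]
              congr 2
              have : (v + 1 - T₀ : ℕ) = (v - T₀ : ℕ) + 1 := by omega
              rw [this]
              push_cast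
              ring
  -- W T₀ is at most d
  have hWT₀ : W T₀ ≤ (d : ℝ) := by
    calc W T₀ ≤ ∑ _j : Fin d, (1 : ℝ) := by
          apply Finset.sum_le_sum
          intro j _
          apply Real.exp_le_one_iff.mpr
          have : (0 : ℝ) ≤ (M j T₀ : ℝ) := Nat.cast_nonneg _
          nlinarith
      _ = d := by simp
  -- the minimizer
  obtain ⟨istar, -, histar⟩ := Finset.exists_mem_eq_inf'
    (Finset.univ_nonempty_iff.mpr (Fin.pos_iff_nonempty.mp hd)) (fun i : Fin d => (M i T : ℝ))
  have hWTlow : Real.exp (-η * M istar T) ≤ W T := by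
    rw [hWdef]
    exact Finset.single_le_sum (f := fun j => Real.exp (-η * M j T))
      (fun j _ => (Real.exp_pos _).le) (Finset.mem_univ istar)
  -- split the total sum
  have hsplit : (∑ t ∈ Finset.range T, m' t)
      = (∑ t ∈ Finset.range T₀, m' t) + ∑ t ∈ Finset.Ico T₀ T, m' t := by
    rw [Finset.range_eq_Ico, ← Finset.sum_Ico_consecutive m' (Nat.zero_le T₀) hT₀T,
      ← Finset.range_eq_Ico]
  set S₂ : ℝ := ∑ t ∈ Finset.Ico T₀ T, m' t with hS₂def
  -- Phase 2 regret bound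
  have hphase2 : S₂ ≤ (M istar T : ℝ) + Real.sqrt (0.5 * Real.log d * ((T : ℝ) - T₀)) := by
    rcases eq_or_lt_of_le hd with hd1 | hd2
    · -- d = 1 : the single hypothesis has weight one
      have hone : ∀ i : Fin d, i = istar := by
        intro i
        have h1 := i.isLt
        have h2 := istar.isLt
        exact Fin.ext (by omega)
      have hsingle : ∀ (f : Fin d → ℝ), (∑ j, f j) = f istar :=
        fun f => Fintype.sum_eq_single istar (fun j hj => absurd (hone j) hj)
      have hw1 : ∀ u : ℕ, w istar u = 1 := by
        intro u
        rw [hw, hsingle (fun j => Real.exp (-η * M j u)), div_self (Real.exp_ne_zero _)]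
      have hm'ℓ : ∀ u ∈ Finset.Ico T₀ T, m' u = ((ℓ istar u : ℕ) : ℝ) := by
        intro u hu
        obtain ⟨hu1, hu2⟩ := Finset.mem_Ico.mp hu
        simp only [hm'def]
        rw [dif_pos hu2, hm2 ⟨u, hu2⟩ hu1,
          hsingle (fun i => w i u * (if h i (x ⟨u, hu2⟩) ≠ y ⟨u, hu2⟩ then (1:ℝ) else 0)),
          hw1, one_mul]
        simp only [hℓdef]
        rw [dif_pos hu2]
        split_ifs <;> norm_num
      have hS₂ : S₂ = ∑ u ∈ Finset.Ico T₀ T, ((ℓ istar u : ℕ) : ℝ) :=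
        Finset.sum_congr rfl hm'ℓ
      have hMT : (M istar T : ℝ) = ∑ u ∈ Finset.range T, ((ℓ istar u : ℕ) : ℝ) := by
        rw [hMsum istar T le_rfl]
        push_cast
        rfl
      have hle : S₂ ≤ (M istar T : ℝ) := by
        rw [hS₂, hMT]
        apply Finset.sum_le_sum_of_subset_of_nonneg
        · intro u hu
          exact Finset.mem_range.mpr (Finset.mem_Ico.mp hu).2
        · intro u _ _
          exact Nat.cast_nonneg _
      have := Real.sqrt_nonneg (0.5 * Real.log d * ((T : ℝ) - T₀))
      linarith
    · -- d ≥ 2 : weighted majority analysis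
      have hL : 0 < Real.log d := Real.log_pos (by exact_mod_cast hd2)
      have hn : (0 : ℝ) < (T : ℝ) - T₀ := by
        have : (T₀ : ℝ) < T := by exact_mod_cast hT₀lt
        linarith
      have hη2 : η ^ 2 = 8 * Real.log d / ((T : ℝ) - T₀) := by
        rw [hη]; exact Real.sq_sqrt (by positivity)
      have hηpos : 0 < η := by
        rw [hη]; exact Real.sqrt_pos.mpr (by positivity)
      have hA : η * Real.sqrt (0.5 * Real.log d * ((T : ℝ) - T₀)) = 2 * Real.log d := by
        rw [hη, ← Real.sqrt_mul (by positivity)]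
        have heq : 8 * Real.log d / ((T : ℝ) - T₀) * (0.5 * Real.log d * ((T : ℝ) - T₀))
            = (2 * Real.log d) ^ 2 := by
          field_simp
          ring
        rw [heq, Real.sqrt_sq (by positivity)]
      have hcast : ((T - T₀ : ℕ) : ℝ) = (T : ℝ) - T₀ := by
        rw [Nat.cast_sub hT₀T]
      have hch : Real.exp (-η * M istar T)
          ≤ (d : ℝ) * Real.exp (-η * S₂ + ((T : ℝ) - T₀) * η ^ 2 / 8) := by
        calc Real.exp (-η * M istar T) ≤ W T := hWTlow
          _ ≤ W T₀ * Real.exp (-η * S₂ + ((T - T₀ : ℕ) : ℝ) * η ^ 2 / 8) :=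
              hiter T hT₀T le_rfl
          _ ≤ (d : ℝ) * Real.exp (-η * S₂ + ((T : ℝ) - T₀) * η ^ 2 / 8) := by
              rw [hcast]
              exact mul_le_mul_of_nonneg_right hWT₀ (Real.exp_pos _).le
      have hlog : -η * (M istar T : ℝ)
          ≤ Real.log d + (-η * S₂ + ((T : ℝ) - T₀) * η ^ 2 / 8) := by
        have h1 := Real.log_le_log (Real.exp_pos _) hch
        rwa [Real.log_exp, Real.log_mul (by positivity) (Real.exp_ne_zero _),
          Real.log_exp] at h1
      have hnη : ((T : ℝ) - T₀) * η ^ 2 / 8 = Real.log d := by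
        rw [hη2]; field_simp
      rw [hnη] at hlog
      have hmul : η * S₂ ≤ η * ((M istar T : ℝ)
          + Real.sqrt (0.5 * Real.log d * ((T : ℝ) - T₀))) := by
        rw [mul_add, hA]
        linarith
      exact (mul_le_mul_iff_right₀ hηpos).mp hmul
  -- put it together
  rw [hsum_m, hsplit, histar, ← hdcard]
  linarith
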